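/- arXiv:math/0406213 — 4 statements merged into one kernel-verified Lean document; each statement's English description precedes it below -/
import Mathlib

section
/- Let Z be a complex n×n matrix with ℓ²-operator norm ‖Z‖ < 1, and let λ₁, …, λₙ be the roots of the characteristic polynomial of Z in ℂ, counted with multiplicity (the eigenvalues of Z). Then each λⱼ satisfies |λⱼ| < 1, and trace L(Z) = ∑_{j=1}^n Log(1 + λⱼ), where Log is the principal branch of the complex logarithm. -/
open Matrix Complex

noncomputable section

/-- Real `2n × 2n` matrices indexed by `Fin n ⊕ Fin n` (the two blocks). -/
abbrev SpMat (n : ℕ) := Matrix (Fin n ⊕ Fin n) (Fin n ⊕ Fin n) ℝ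

/-- The standard skew form `K = ((0,1),(-1,0))`. -/
def symplK (n : ℕ) : SpMat n := Matrix.fromBlocks 0 1 (-1) 0

/-- The real symplectic group `Sp(2n, ℝ)`: matrices with `gᵀ K g = K`. -/
def Sp (n : ℕ) : Set (SpMat n) := {g | gᵀ * symplK n * g = symplK n}

/-- The matrix `J = (1/√2) ((1, i·1), (i·1, 1))`. -/
def Jmat (n : ℕ) : Matrix (Fin n ⊕ Fin n) (Fin n ⊕ Fin n) ℂ :=
  (Real.sqrt 2 : ℂ)⁻¹ •
    Matrix.fromBlocks 1 (Complex.I • 1) (Complex.I • 1) 1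

variable {n : ℕ}

/-- `Φ(g)`: the upper-left `n × n` block of `J⁻¹ g J`. -/
def Phi (g : SpMat n) : Matrix (Fin n) (Fin n) ℂ :=
  ((Jmat n)⁻¹ * g.map (fun x => (x : ℂ)) * Jmat n).toBlocks₁₁

/-- `Ψ(g)`: the upper-right `n × n` block of `J⁻¹ g J`. -/
def Psi (g : SpMat n) : Matrix (Fin n) (Fin n) ℂ :=
  ((Jmat n)⁻¹ * g.map (fun x => (x : ℂ)) * Jmat n).toBlocks₁₂

/-- Entrywise complex conjugation of a matrix. -/
def conjM (M : Matrix (Fin n) (Fin n) ℂ) : Matrix (Fin n) (Fin n) ℂ :=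
  M.map (starRingEnd ℂ)

/-- The ℓ²-operator norm of a complex matrix. -/
def opNorm (Z : Matrix (Fin n) (Fin n) ℂ) : ℝ :=
  ‖Matrix.toEuclideanCLM (𝕜 := ℂ) Z‖

/-- `L(Z) = ∑_{k ≥ 1} (-1)^{k+1} Z^k / k`, a branch of `log (1 + Z)` for `‖Z‖ < 1`. -/
def matLog (Z : Matrix (Fin n) (Fin n) ℂ) : Matrix (Fin n) (Fin n) ℂ :=
  ∑' k : ℕ, ((-1 : ℂ) ^ k / (k + 1)) • Z ^ (k + 1)

/-- The Berezin cocycle `c(g₁,g₂) = Im tr L(Φ(g₁)⁻¹ Ψ(g₁) conj(Ψ(g₂)) Φ(g₂)⁻¹)`. -/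
def berezinC (g₁ g₂ : SpMat n) : ℝ :=
  (Matrix.trace (matLog ((Phi g₁)⁻¹ * Psi g₁ * conjM (Psi g₂) * (Phi g₂)⁻¹))).im

/-!
The eigenvalues of `Z` lie in its spectrum, so they are bounded by the operator norm. For the trace
formula, `tr Zᵏ = ∑ⱼ λⱼᵏ`: on the generalized eigenspace of `λ`, of dimension the multiplicity of
`λ`, the map `Z - λ` is nilpotent, so `Zᵏ` has trace `λᵏ` times that dimension. Hence
`tr L(Z) = ∑ₖ (-1)ᵏ/(k+1) ∑ⱼ λⱼ^(k+1)`, and exchanging the finite sum over `j` with the series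
gives `∑ⱼ Log (1 + λⱼ)` by the Taylor series of `Log` on the unit disc.
-/

open Polynomial

namespace Module.End

variable {K V : Type*} [Field K] [AddCommGroup V] [Module K V] [FiniteDimensional K V]

theorem trace_pow_of_isNilpotent_sub_algebraMap {f : End K V} {μ : K}
    (hf : IsNilpotent (f - algebraMap K (End K V) μ)) (k : ℕ) :
    LinearMap.trace K V (f ^ k) = μ ^ k * Module.finrank K V := by
  induction k with
  | zero => simp [LinearMap.trace_one]
  | succ k ih =>
    rw [pow_succ, mul_eq_comp, LinearMap.trace_comp_eq_mul_of_commute_of_isNilpotent μ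
      (Commute.self_pow f k).symm hf, ih]
    ring

theorem trace_pow_eq_sum_roots_charpoly [IsAlgClosed K] (f : End K V) (k : ℕ) :
    LinearMap.trace K V (f ^ k) = (f.charpoly.roots.map (· ^ k)).sum := by
  classical
  have hinternal := DirectSum.isInternal_submodule_of_iSupIndep_of_iSup_eq_top
    f.independent_maxGenEigenspace f.iSup_maxGenEigenspace_eq_top
  have hfinite := WellFoundedGT.finite_ne_bot_of_iSupIndep f.independent_maxGenEigenspace
  have hsupport : hfinite.toFinset = f.charpoly.roots.toFinset := by
    ext μ
    simp only [Set.Finite.mem_toFinset, Set.mem_ofPred_eq, Multiset.mem_toFinset,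
      ← Multiset.count_ne_zero, count_roots, ← LinearMap.finrank_maxGenEigenspace_eq, ne_eq,
      Submodule.finrank_eq_zero]
  rw [LinearMap.trace_eq_sum_trace_restrict' hinternal hfinite
      (fun μ => mapsTo_maxGenEigenspace_of_comm (Commute.self_pow f k) μ),
    Finset.sum_multiset_map_count, ← hsupport]
  refine Finset.sum_congr rfl fun μ _ => ?_
  rw [← pow_restrict k (mapsTo_maxGenEigenspace_of_comm (Commute.refl f) μ),
    trace_pow_of_isNilpotent_sub_algebraMap
      (f.isNilpotent_restrict_maxGenEigenspace_sub_algebraMap μ) k,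
    LinearMap.finrank_maxGenEigenspace_eq, count_roots, nsmul_eq_mul, mul_comm]

end Module.End

namespace Matrix

variable {ι : Type*} [Fintype ι] [DecidableEq ι]

theorem trace_pow_eq_sum_roots_charpoly {K : Type*} [Field K] [IsAlgClosed K]
    (A : Matrix ι ι K) (k : ℕ) :
    (A ^ k).trace = (A.charpoly.roots.map (· ^ k)).sum := by
  rw [← trace_toLin'_eq, ← charpoly_toLin', ← Module.End.trace_pow_eq_sum_roots_charpoly]
  exact congrArg _ (map_pow toLinAlgEquiv' A k)

open scoped Matrix.Norms.L2Operator in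
theorem norm_le_norm_toEuclideanCLM_of_mem_roots_charpoly {𝕜 : Type*} [RCLike 𝕜]
    {A : Matrix ι ι 𝕜} {μ : 𝕜} (hμ : μ ∈ A.charpoly.roots) :
    ‖μ‖ ≤ ‖toEuclideanCLM (𝕜 := 𝕜) A‖ := by
  have hspec : μ ∈ spectrum 𝕜 A := mem_spectrum_of_isRoot_charpoly (isRoot_of_mem_roots hμ)
  have : Nontrivial (Matrix ι ι 𝕜) := by
    by_contra h
    rw [not_nontrivial_iff_subsingleton] at h
    simp [spectrum.of_subsingleton] at hspec
  rw [← cstar_norm_def]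
  exact spectrum.norm_le_norm_of_mem hspec

end Matrix

theorem hasSum_multiset_sum_map {ι α β : Type*} [AddCommMonoid α] [TopologicalSpace α]
    [ContinuousAdd α] {s : Multiset ι} {f : ι → β → α} {a : ι → α}
    (h : ∀ i ∈ s, HasSum (f i) (a i)) :
    HasSum (fun b => (s.map (f · b)).sum) (s.map a).sum := by
  induction s using Multiset.induction_on with
  | empty => exact hasSum_zero
  | cons i s ih =>
    simp only [Multiset.map_cons, Multiset.sum_cons]
    exact (h i (Multiset.mem_cons_self i s)).add (ih fun j hj => h j (Multiset.mem_cons_of_mem hj))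

theorem summable_logSeries {A : Type*} [NormedRing A] [NormedAlgebra ℂ A] [CompleteSpace A]
    {a : A} (ha : ‖a‖ < 1) :
    Summable (fun k : ℕ => ((-1 : ℂ) ^ k / (k + 1)) • a ^ (k + 1)) := by
  refine .of_norm_bounded ((summable_geometric_of_lt_one (norm_nonneg a) ha).mul_left ‖a‖)
    fun k => ?_
  have hcoeff : ‖(-1 : ℂ) ^ k / (k + 1)‖ ≤ 1 := by
    rw [norm_div, norm_pow, norm_neg, norm_one, one_pow]
    exact div_le_one_of_le₀ (by norm_cast; simp) (norm_nonneg _)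
  calc ‖((-1 : ℂ) ^ k / (k + 1)) • a ^ (k + 1)‖ ≤ 1 * ‖a‖ ^ (k + 1) := by
        rw [norm_smul]
        exact mul_le_mul hcoeff (norm_pow_le' a k.succ_pos) (norm_nonneg _) zero_le_one
    _ = ‖a‖ * ‖a‖ ^ k := by ring

theorem Complex.hasSum_logSeries {z : ℂ} (hz : ‖z‖ < 1) :
    HasSum (fun k : ℕ => (-1 : ℂ) ^ k / (k + 1) * z ^ (k + 1)) (log (1 + z)) := by
  have h := (hasSum_nat_add_iff' 1).mpr (hasSum_taylorSeries_log hz)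
  simp only [Finset.sum_range_one, CharP.cast_eq_zero, div_zero, sub_zero] at h
  refine h.congr_fun fun k => ?_
  push_cast
  ring

open scoped Matrix.Norms.L2Operator in
theorem hasSum_trace_matLog {Z : Matrix (Fin n) (Fin n) ℂ} (hZ : opNorm Z < 1) :
    HasSum (fun k : ℕ => (-1 : ℂ) ^ k / (k + 1) * (Z ^ (k + 1)).trace) (matLog Z).trace := by
  have := (summable_logSeries (a := Z) hZ).hasSum.map (traceAddMonoidHom (Fin n) ℂ)
    continuous_id.matrix_trace
  simpa [matLog, trace_smul, Function.comp_def] using this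

/-- for `‖Z‖ < 1`, the eigenvalues `λⱼ` of `Z` (roots of its characteristic
polynomial, with multiplicity) satisfy `|λⱼ| < 1`, and `tr L(Z) = ∑ⱼ Log (1 + λⱼ)`. -/
theorem stmt9 (n : ℕ) (Z : Matrix (Fin n) (Fin n) ℂ) (hZ : opNorm Z < 1) :
    (∀ lam ∈ Z.charpoly.roots, ‖lam‖ < 1) ∧
    Matrix.trace (matLog Z) =
      (Z.charpoly.roots.map (fun lam => Complex.log (1 + lam))).sum := by
  have hroots : ∀ lam ∈ Z.charpoly.roots, ‖lam‖ < 1 := fun lam hlam =>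
    (Matrix.norm_le_norm_toEuclideanCLM_of_mem_roots_charpoly hlam).trans_lt hZ
  refine ⟨hroots, ?_⟩
  have htrace := hasSum_trace_matLog hZ
  simp_rw [Matrix.trace_pow_eq_sum_roots_charpoly, ← Multiset.sum_map_mul_left] at htrace
  exact htrace.unique
    (hasSum_multiset_sum_map fun lam hlam => Complex.hasSum_logSeries (hroots lam hlam))
end
end

section
/- Let G be a group and c : G × G → ℝ a 2-cocycle, i.e. c(e,g) = c(g,e) = 0 and c(g₁,g₂) + c(g₁g₂,g₃) = c(g₁,g₂g₃) + c(g₂,g₃) for all g₁,g₂,g₃ ∈ G. Let (X,μ) be a measure space, let p₂, p₃ : X → X be measurable bijections preserving the measure μ, and let h₁, h₂, h₃ : X → G be functions. Assume that the functions x ↦ c(h₁(p₂(x)), h₂(x)), x ↦ c(h₁(p₂(p₃(x)))·h₂(p₃(x)), h₃(x)), x ↦ c(h₂(p₃(x)), h₃(x)), x ↦ c(h₁(p₂(p₃(x))), h₂(p₃(x))·h₃(x)) and x ↦ c(h₁(p₂(p₃(x))), h₂(p₃(x))) are all μ-integrable. Then ∫ c(h₁(p₂(x)), h₂(x)) dμ(x)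 + ∫ c(h₁(p₂(p₃(x)))·h₂(p₃(x)), h₃(x)) dμ(x) = ∫ c(h₂(p₃(x)), h₃(x)) dμ(x) + ∫ c(h₁(p₂(p₃(x))), h₂(p₃(x))·h₃(x)) dμ(x). In other words, C({p₁,h₁},{p₂,h₂}) := ∫ c(h₁(p₂(x)), h₂(x)) dμ(x) satisfies the 2-cocycle identity on the semidirect product of measure-preserving transformations with G-valued functions. -/
open MeasureTheory

/-- the integrated cocycle
`C({p₁,h₁},{p₂,h₂}) := ∫ c(h₁(p₂ x), h₂ x) dμ(x)` satisfies the 2-cocycle identity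
on the semidirect product `𝔅(X,G)` of measure-preserving transformations with
`G`-valued functions. -/
theorem stmt11 {G : Type*} [Group G] (c : G → G → ℝ)
    (hce : ∀ g : G, c 1 g = 0 ∧ c g 1 = 0)
    (hcoc : ∀ g₁ g₂ g₃ : G,
      c g₁ g₂ + c (g₁ * g₂) g₃ = c g₁ (g₂ * g₃) + c g₂ g₃)
    {X : Type*} [MeasurableSpace X] (μ : Measure X)
    (p₂ p₃ : X → X)
    (hp₂ : MeasurePreserving p₂ μ μ) (hp₃ : MeasurePreserving p₃ μ μ)
    (hb₂ : Function.Bijective p₂) (hb₃ : Function.Bijective p₃)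
    (h₁ h₂ h₃ : X → G)
    (hi1 : Integrable (fun x => c (h₁ (p₂ x)) (h₂ x)) μ)
    (hi2 : Integrable (fun x => c (h₁ (p₂ (p₃ x)) * h₂ (p₃ x)) (h₃ x)) μ)
    (hi3 : Integrable (fun x => c (h₂ (p₃ x)) (h₃ x)) μ)
    (hi4 : Integrable (fun x => c (h₁ (p₂ (p₃ x))) (h₂ (p₃ x) * h₃ x)) μ)
    (hi5 : Integrable (fun x => c (h₁ (p₂ (p₃ x))) (h₂ (p₃ x))) μ) :
    (∫ x, c (h₁ (p₂ x)) (h₂ x) ∂μ)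
      + (∫ x, c (h₁ (p₂ (p₃ x)) * h₂ (p₃ x)) (h₃ x) ∂μ)
    = (∫ x, c (h₂ (p₃ x)) (h₃ x) ∂μ)
      + (∫ x, c (h₁ (p₂ (p₃ x))) (h₂ (p₃ x) * h₃ x) ∂μ) := by
  have key : (∫ x, c (h₁ (p₂ x)) (h₂ x) ∂μ)
      = ∫ x, c (h₁ (p₂ (p₃ x))) (h₂ (p₃ x)) ∂μ := by
    calc (∫ x, c (h₁ (p₂ x)) (h₂ x) ∂μ)
        = ∫ x, c (h₁ (p₂ x)) (h₂ x) ∂(μ.map p₃) := by rw [hp₃.map_eq]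
      _ = ∫ x, c (h₁ (p₂ (p₃ x))) (h₂ (p₃ x)) ∂μ := by
          exact integral_map hp₃.measurable.aemeasurable
            (by rw [hp₃.map_eq]; exact hi1.1)
  rw [key, ← integral_add hi5 hi2, add_comm (∫ x, c (h₂ (p₃ x)) (h₃ x) ∂μ),
    ← integral_add hi4 hi3]
  exact integral_congr_ae (Filter.Eventually.of_forall fun x => hcoc _ _ _)
end

section
/- Let n ≥ 3 and let ℬ(ℤ) be the subgroup of Sp(2n,ℤ) consisting of integer symplectic matrices whose lower-left n×n block is the zero matrix and whose upper-left n×n block A satisfies det A = 1 (such matrices have the block form ((A, B), (0, A^{−T}))). Then every group homomorphism from ℬ(ℤ) to the multiplicative group ℂ* of nonzero complex numbers is trivial (identically 1). -/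
/-!
Every element of `ℬ(ℤ)` factors as `m(A) u(S)` with `m(A) = ((A, 0), (0, A⁻ᵀ))`, `A ∈ SL(n, ℤ)`,
and `u(S) = ((1, S), (0, 1))`, `S` symmetric. By the Euclidean algorithm `SL(n, ℤ)` is generated by
elementary matrices, and for `n ≥ 3` each of them is a commutator `⁅E_ik(c), E_kj(1)⁆`, so `χ ∘ m`
is trivial. Then `S ↦ χ (u S)` is a character of the additive group of symmetric matrices which is
invariant under `S ↦ A S Aᵀ`, because `m(A) u(S) m(A)⁻¹ = u(A S Aᵀ)`. Conjugating by elementary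
matrices produces the increments `E_ik + E_ki` and `E_ii`, and these generate all symmetric
matrices.
-/

open Matrix Complex

noncomputable section

variable {n : ℕ}

/-- `Sp(2n, ℤ)`: elements of `Sp(2n,ℝ)` with integer entries. -/
def SpZ (n : ℕ) : Set (SpMat n) :=
  {g | g ∈ Sp n ∧ ∀ i j, ∃ m : ℤ, g i j = (m : ℝ)}

/-- The subgroup `ℬ(ℤ) ⊂ Sp(2n,ℤ)` of block upper-triangular matrices
`((A,B),(0,A^{-T}))` with `det A = 1`. -/
def BZ (n : ℕ) : Set (SpMat n) :=
  {g | g ∈ SpZ n ∧ g.toBlocks₂₁ = 0 ∧ (g.toBlocks₁₁).det = 1}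

namespace Matrix

variable {ι R : Type*} [CommRing R]

section Transvection

variable [Fintype ι] [DecidableEq ι]

open TransvectionStruct

theorem transvection_mulVec (i j : ι) (c : R) (v : ι → R) :
    transvection i j c *ᵥ v = Function.update v i (v i + c * v j) := by
  ext k
  rcases eq_or_ne k i with rfl | hk
  · simp [transvection, add_mulVec, single_mulVec]
  · simp [transvection, add_mulVec, single_mulVec, hk]

theorem exists_dotProduct_transvection_mulVec_eq_one {f v : ι → R} (hf : f ⬝ᵥ v = 1)
    {i j : ι} (hij : i ≠ j) (c : R) : ∃ f' : ι → R, f' ⬝ᵥ (transvection i j c *ᵥ v) = 1 :=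
  ⟨f ᵥ* transvection i j (-c), by
    rw [← dotProduct_mulVec, mulVec_mulVec, transvection_mul_transvection_same _ _ hij,
      neg_add_cancel, transvection_zero, one_mulVec, hf]⟩

theorem exists_list_transvec_mulVec_single_eq_single [Nontrivial ι] (i ℓ : ι) (u : Rˣ) :
    ∃ L : List (TransvectionStruct ι R),
      (L.map toMatrix).prod *ᵥ Pi.single i (u : R) = Pi.single ℓ 1 := by
  have h_of_ne : ∀ i ℓ : ι, i ≠ ℓ → ∀ u : Rˣ, ∃ L : List (TransvectionStruct ι R),
      (L.map toMatrix).prod *ᵥ Pi.single i (u : R) = Pi.single ℓ 1 := by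
    intro i ℓ hiℓ u
    -- `u eᵢ ↦ u eᵢ + eℓ ↦ eℓ`
    refine ⟨[⟨i, ℓ, hiℓ, -u⟩, ⟨ℓ, i, hiℓ.symm, ↑u⁻¹⟩], ?_⟩
    ext k
    simp only [List.map_cons, List.map_nil, List.prod_cons, List.prod_nil, mul_one, toMatrix_mk,
      ← mulVec_mulVec, transvection_mulVec]
    rcases eq_or_ne k i with rfl | hki
    · simp [hiℓ]
    · rcases eq_or_ne k ℓ with rfl | hkℓ
      · simp [hiℓ.symm]
      · simp [hki, hkℓ]
  obtain hiℓ | rfl := ne_or_eq i ℓ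
  · exact h_of_ne i ℓ hiℓ u
  · obtain ⟨j, hj⟩ := exists_ne i
    obtain ⟨L₁, h₁⟩ := h_of_ne i j hj.symm u
    obtain ⟨L₂, h₂⟩ := h_of_ne j i hj 1
    exact ⟨L₂ ++ L₁, by rw [List.map_append, List.prod_append, ← mulVec_mulVec, h₁, ← h₂]; rfl⟩

theorem exists_list_transvec_mulVec_eq_single [Nontrivial ι] (ℓ : ι) (v : ι → ℤ)
    (hv : ∃ f : ι → ℤ, f ⬝ᵥ v = 1) :
    ∃ L : List (TransvectionStruct ι ℤ), (L.map toMatrix).prod *ᵥ v = Pi.single ℓ 1 := by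
  obtain ⟨m, hm⟩ : ∃ m, ∑ i, (v i).natAbs = m := ⟨_, rfl⟩
  induction m using Nat.strong_induction_on generalizing v with
  | _ m IH =>
  by_cases hpair : ∃ a b, a ≠ b ∧ v a ≠ 0 ∧ (v a).natAbs ≤ (v b).natAbs
  · -- Euclidean step: a transvection replaces `v b` by `v b % v a`, lowering `∑ i, |v i|`.
    obtain ⟨a, b, hab, ha, hle⟩ := hpair
    obtain ⟨f, hf⟩ := hv
    have hv' : transvection b a (-(v b / v a)) *ᵥ v = Function.update v b (v b % v a) := by
      rw [transvection_mulVec, Int.emod_def]; ring_nf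
    have hr : (v b % v a).natAbs < (v b).natAbs := by
      have h₀ := Int.emod_nonneg (v b) ha
      have h₁ := Int.emod_lt (v b) ha
      omega
    have hlt : ∑ i, (Function.update v b (v b % v a) i).natAbs < m := by
      rw [← hm]
      refine Finset.sum_lt_sum (fun i _ => ?_) ⟨b, Finset.mem_univ _, ?_⟩
      · rcases eq_or_ne i b with rfl | hi
        · simpa using hr.le
        · simp [hi]
      · simpa using hr
    obtain ⟨L, hL⟩ :=
      IH _ hlt _ (hv' ▸ exists_dotProduct_transvection_mulVec_eq_one hf hab.symm _) rfl
    exact ⟨L ++ [⟨b, a, hab.symm, -(v b / v a)⟩], by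
      simp only [List.map_append, List.prod_append, ← mulVec_mulVec, List.map_cons, List.map_nil,
        List.prod_cons, List.prod_nil, mul_one, toMatrix_mk, hv', hL]⟩
  · obtain ⟨f, hf⟩ := hv
    obtain ⟨i, hi⟩ : ∃ i, v i ≠ 0 := by
      by_contra! h
      simp [show v = 0 from funext h] at hf
    have hsingle : v = Pi.single i (v i) := by
      ext k
      rcases eq_or_ne k i with rfl | hki
      · simp
      · rw [Pi.single_eq_of_ne hki]
        by_contra hk
        rcases le_total (v k).natAbs (v i).natAbs with h | h
        · exact hpair ⟨k, i, hki, hk, h⟩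
        · exact hpair ⟨i, k, hki.symm, hi, h⟩
    have hunit : IsUnit (v i) := by
      rw [hsingle, dotProduct_single] at hf
      exact IsUnit.of_mul_eq_one_right _ hf
    rw [hsingle]
    exact exists_list_transvec_mulVec_single_eq_single i ℓ hunit.unit

theorem exists_list_transvec_mul_mulVec_single_eq_single [Nontrivial ι] (M : Matrix ι ι ℤ)
    (hM : M.det = 1) (ℓ : ι) : ∃ L : List (TransvectionStruct ι ℤ),
      ((L.map toMatrix).prod * M) *ᵥ Pi.single ℓ 1 = Pi.single ℓ 1 := by
  -- Row `ℓ` of the adjugate shows that column `ℓ` of `M` is unimodular.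
  have hcol : M.adjugate ℓ ⬝ᵥ (fun i => M i ℓ) = 1 := by
    simpa [mul_apply', hM] using congr($(adjugate_mul M) ℓ ℓ)
  obtain ⟨L, hL⟩ := exists_list_transvec_mulVec_eq_single ℓ _ ⟨_, hcol⟩
  exact ⟨L, by rw [← mulVec_mulVec, mulVec_single_one]; exact hL⟩

theorem exists_list_transvec_eq_fromBlocks_one_zero_one {κ : Type*} [Fintype κ] [DecidableEq κ]
    (w : Matrix κ ι R) : ∃ L : List (TransvectionStruct (ι ⊕ κ) R),
      fromBlocks 1 0 w 1 = (L.map toMatrix).prod := by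
  induction w using Matrix.induction_on' with
  | h_zero => exact ⟨[], fromBlocks_one⟩
  | h_add w w' hw hw' =>
    obtain ⟨L, hL⟩ := hw
    obtain ⟨L', hL'⟩ := hw'
    refine ⟨L ++ L', ?_⟩
    rw [List.map_append, List.prod_append, ← hL, ← hL', fromBlocks_multiply]
    simp
  | h_std_basis k i c =>
    refine ⟨[⟨Sum.inr k, Sum.inl i, by simp, c⟩], ?_⟩
    simp only [List.map_cons, List.map_nil, List.prod_cons, List.prod_nil, mul_one, toMatrix_mk,
      transvection]
    ext (a | a) (b | b) <;> simp [single, one_apply]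

theorem eq_fromBlocks_mul_fromBlocks_of_mulVec_single (M : Matrix (ι ⊕ Unit) (ι ⊕ Unit) R)
    (hM : M *ᵥ Pi.single (Sum.inr ()) 1 = Pi.single (Sum.inr ()) 1) :
    M = fromBlocks M.toBlocks₁₁ 0 0 1 * fromBlocks 1 0 M.toBlocks₂₁ 1 := by
  rw [fromBlocks_multiply]
  ext (i | i) (j | j)
  · simp [toBlocks₁₁]
  · simpa [mulVec_single_one] using congr($hM (Sum.inl i))
  · simp [toBlocks₂₁]
  · simpa [mulVec_single_one] using congr($hM (Sum.inr i))

theorem exists_list_transvec_eq_of_submatrix {κ : Type*} [Fintype κ] [DecidableEq κ]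
    (e : κ ≃ ι) {M : Matrix ι ι R}
    (h : ∃ L : List (TransvectionStruct κ R), M.submatrix e e = (L.map toMatrix).prod) :
    ∃ L : List (TransvectionStruct ι R), M = (L.map toMatrix).prod := by
  obtain ⟨L, hL⟩ := h
  refine ⟨L.map (reindexEquiv e), ?_⟩
  rw [List.map_map, toMatrix_reindexEquiv_prod, ← hL]
  ext i j
  simp

theorem exists_list_transvec_eq_of_det_eq_one_sum_unit [Nonempty ι]
    (IH : ∀ A : Matrix ι ι ℤ, A.det = 1 → ∃ L : List (TransvectionStruct ι ℤ),
      A = (L.map toMatrix).prod)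
    (M : Matrix (ι ⊕ Unit) (ι ⊕ Unit) ℤ) (hM : M.det = 1) :
    ∃ L : List (TransvectionStruct (ι ⊕ Unit) ℤ), M = (L.map toMatrix).prod := by
  have : Nontrivial (ι ⊕ Unit) := ⟨⟨Sum.inl (Classical.arbitrary ι), Sum.inr (), Sum.inl_ne_inr⟩⟩
  obtain ⟨L₁, hL₁⟩ := exists_list_transvec_mul_mulVec_single_eq_single M hM (Sum.inr ())
  set M₁ := (L₁.map toMatrix).prod * M
  have hM₁ := eq_fromBlocks_mul_fromBlocks_of_mulVec_single M₁ hL₁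
  have hdet : M₁.toBlocks₁₁.det = 1 := by
    have h : M₁.det = 1 := by rw [det_mul, det_toMatrix_prod, hM, one_mul]
    rwa [hM₁, det_mul, det_fromBlocks_zero₂₁, det_fromBlocks_zero₁₂, det_one, det_one, mul_one,
      mul_one, mul_one] at h
  obtain ⟨L₂, hL₂⟩ := IH _ hdet
  obtain ⟨L₃, hL₃⟩ := exists_list_transvec_eq_fromBlocks_one_zero_one M₁.toBlocks₂₁
  have hlift : fromBlocks M₁.toBlocks₁₁ 0 0 (1 : Matrix Unit Unit ℤ) =
      (L₂.map (toMatrix ∘ sumInl Unit)).prod := by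
    simpa [hL₂, fromBlocks_one] using
      (sumInl_toMatrix_prod_mul (M := 1) (L := L₂) (N := (1 : Matrix Unit Unit ℤ))).symm
  refine ⟨L₁.reverse.map TransvectionStruct.inv ++ L₂.map (sumInl Unit) ++ L₃, ?_⟩
  calc M = (L₁.reverse.map (toMatrix ∘ TransvectionStruct.inv)).prod * M₁ := by
        rw [← Matrix.mul_assoc, reverse_inv_prod_mul_prod, Matrix.one_mul]
    _ = _ := by
        rw [hM₁, hlift, hL₃]
        simp [List.map_append, List.prod_append, List.map_map]

theorem exists_list_transvec_eq_of_det_eq_one (M : Matrix ι ι ℤ) (hM : M.det = 1) :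
    ∃ L : List (TransvectionStruct ι ℤ), M = (L.map toMatrix).prod := by
  suffices h : ∀ (N : ℕ) (A : Matrix (Fin N) (Fin N) ℤ), A.det = 1 →
      ∃ L : List (TransvectionStruct (Fin N) ℤ), A = (L.map toMatrix).prod from
    exists_list_transvec_eq_of_submatrix (Fintype.equivFin ι).symm
      (h _ _ (by rw [det_submatrix_equiv_self, hM]))
  intro N
  induction N with
  | zero => exact fun A _ => ⟨[], Subsingleton.elim _ _⟩
  | succ N IH =>
    intro A hA
    rcases N with _ | N
    · refine ⟨[], ?_⟩
      ext i j
      fin_cases i; fin_cases j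
      simpa [det_fin_one] using hA
    · let e : Fin (N + 1) ⊕ Unit ≃ Fin (N + 2) :=
        (Equiv.sumCongr (Equiv.refl _) (Equiv.ofUnique Unit (Fin 1))).trans finSumFinEquiv
      exact exists_list_transvec_eq_of_submatrix e
        (exists_list_transvec_eq_of_det_eq_one_sum_unit IH _ (by rw [det_submatrix_equiv_self, hA]))

namespace SpecialLinearGroup

open scoped commutatorElement

theorem transvection_eq_commutatorElement {i j k : ι} (hij : i ≠ j) (hik : i ≠ k) (hkj : k ≠ j)
    (c : R) : transvection hij c = ⁅transvection hik c, transvection hkj 1⁆ := by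
  rw [commutatorElement_def, transvection_inv, transvection_inv]
  refine Subtype.ext ?_
  simp only [coe_mul, transvection_coe, mul_add, add_mul, Matrix.one_mul,
    single_mul_single_same, single_mul_single_of_ne _ _ _ _ hik.symm,
    single_mul_single_of_ne _ _ _ _ hkj.symm, single_mul_single_of_ne _ _ _ _ hij.symm,
    Matrix.zero_mul, ← single_neg, mul_neg, neg_mul, mul_one]
  abel

theorem monoidHom_apply_eq_one {M : Type*} [CommMonoid M] (hι : 3 ≤ Fintype.card ι)
    (f : SpecialLinearGroup ι ℤ →* M) (A : SpecialLinearGroup ι ℤ) : f A = 1 := by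
  have hcomm : ∀ a b : SpecialLinearGroup ι ℤ, f ⁅a, b⁆ = 1 := by
    intro a b
    rw [commutatorElement_def, map_mul, map_mul, map_mul, mul_right_comm (f a), ← map_mul,
      mul_inv_cancel, map_one, one_mul, ← map_mul, mul_inv_cancel, map_one]
  have htrans : ∀ t : TransvectionStruct ι ℤ, f t.toSpecialLinearGroup = 1 := by
    rintro ⟨i, j, hij, c⟩
    obtain ⟨k, hki, hkj⟩ := ENat.exists_ne_ne_of_three_le (by simpa using hι) i j
    rw [toSpecialLinearGroup_mk, transvection_eq_commutatorElement hij hki.symm hkj, hcomm]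
  obtain ⟨L, hL⟩ := exists_list_transvec_eq_of_det_eq_one A.1 A.2
  have hA : A = (L.map toSpecialLinearGroup).prod := by
    apply coeMonoidHom_injective
    rw [coeMonoidHom_apply, hL, map_list_prod, List.map_map]
    rfl
  rw [hA, map_list_prod, List.map_map]
  exact List.prod_eq_one (by simpa using fun t _ => htrans t)

end SpecialLinearGroup

theorem IsSymm.exists_eq_add_transpose_sub_diagonal {α : Type*} [AddCommGroup α]
    {S : Matrix ι ι α} (hS : S.IsSymm) :
    ∃ X : Matrix ι ι α, S = X + Xᵀ - diagonal fun i => X i i := by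
  let e := Fintype.equivFin ι
  refine ⟨of fun i j => if e i ≤ e j then S i j else 0, ?_⟩
  ext i j
  rcases lt_trichotomy (e i) (e j) with h | h | h
  · simp [h.le, h.not_ge, e.injective.ne_iff.mp h.ne]
  · obtain rfl := e.injective h
    simp
  · simp [h.le, h.not_ge, e.injective.ne_iff.mp h.ne', hS.apply i j]

theorem transvection_mul_add_transpose_mul_transpose (i : ι) {j k : ι} (hjk : j ≠ k) (c : R) :
    transvection i j 1 * (single j k c + (single j k c)ᵀ) * (transvection i j 1)ᵀ =
      (single j k c + (single j k c)ᵀ) + (single i k c + (single i k c)ᵀ) := by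
  simp only [transvection, transpose_add, transpose_one, transpose_single, add_mul, mul_add,
    single_mul_single_same, single_mul_single_of_ne _ _ _ _ hjk,
    single_mul_single_of_ne _ _ _ _ hjk.symm, mul_one, one_mul, Matrix.zero_mul]
  abel

theorem transvection_mul_single_mul_transpose (i j : ι) (c : R) :
    transvection i j 1 * single j j c * (transvection i j 1)ᵀ =
      single j j c + ((single i j c + (single i j c)ᵀ) + single i i c) := by
  simp only [transvection, transpose_add, transpose_one, transpose_single, add_mul, mul_add,
    single_mul_single_same, mul_one, one_mul]
  abel

theorem IsSymm.apply_eq_one_of_single {M : Type*} [Monoid M] (ψ : Matrix ι ι R → M)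
    (h0 : ψ 0 = 1) (hadd : ∀ S T : Matrix ι ι R, S.IsSymm → T.IsSymm → ψ (S + T) = ψ S * ψ T)
    (hoff : ∀ i j : ι, i ≠ j → ∀ c : R, ψ (single i j c + (single i j c)ᵀ) = 1)
    (hdiag : ∀ (i : ι) (c : R), ψ (single i i c) = 1)
    {S : Matrix ι ι R} (hS : S.IsSymm) : ψ S = 1 := by
  have hsymm : ∀ X : Matrix ι ι R, (X + Xᵀ - diagonal fun i => X i i).IsSymm := fun X =>
    (isSymm_add_transpose_self X).sub (isSymm_diagonal _)
  -- `X ↦ X + Xᵀ - diagonal X` is additive and onto the symmetric matrices.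
  obtain ⟨X, rfl⟩ := hS.exists_eq_add_transpose_sub_diagonal
  induction X using Matrix.induction_on' with
  | h_zero => simpa using h0
  | h_add X Y hX hY =>
    have hXY : X + Y + (X + Y)ᵀ - (diagonal fun i => (X + Y) i i) =
        (X + Xᵀ - diagonal fun i => X i i) + (Y + Yᵀ - diagonal fun i => Y i i) := by
      simp only [transpose_add, add_apply, ← diagonal_add]
      abel
    rw [hXY, hadd _ _ (hsymm X) (hsymm Y), hX (hsymm X), hY (hsymm Y), one_mul]
  | h_std_basis i j c =>
    rcases eq_or_ne i j with rfl | hij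
    · have hX : single i i c + (single i i c)ᵀ - (diagonal fun k => single i i c k k) =
          single i i c := by
        ext a b; simp [single, diagonal]; grind
      rw [hX, hdiag]
    · have hX : single i j c + (single i j c)ᵀ - (diagonal fun k => single i j c k k) =
          single i j c + (single i j c)ᵀ := by
        ext a b; simp [single, diagonal]; grind
      rw [hX, hoff i j hij]

theorem IsSymm.apply_eq_one_of_transvection_congr {M : Type*} [CommMonoid M]
    (hι : 3 ≤ Fintype.card ι) (ψ : Matrix ι ι R → M) (h0 : ψ 0 = 1)
    (hadd : ∀ S T : Matrix ι ι R, S.IsSymm → T.IsSymm → ψ (S + T) = ψ S * ψ T)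
    (hcongr : ∀ i j : ι, i ≠ j → ∀ S : Matrix ι ι R, S.IsSymm →
      ψ (transvection i j 1 * S * (transvection i j 1)ᵀ) = ψ S)
    {S : Matrix ι ι R} (hS : S.IsSymm) : ψ S = 1 := by
  have hcancel : ∀ S X : Matrix ι ι R, S.IsSymm → X.IsSymm → ψ (S + X) = ψ S → ψ X = 1 := by
    intro S X hS hX h
    have hunit : IsUnit (ψ S) :=
      IsUnit.of_mul_eq_one (ψ (-S)) (by rw [← hadd _ _ hS hS.neg, add_neg_cancel, h0])
    rw [hadd _ _ hS hX] at h
    exact hunit.mul_left_cancel (h.trans (mul_one _).symm)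
  have hoff : ∀ i j : ι, i ≠ j → ∀ c : R, ψ (single i j c + (single i j c)ᵀ) = 1 := by
    intro i k hik c
    obtain ⟨j, hji, hjk⟩ := ENat.exists_ne_ne_of_three_le (by simpa using hι) i k
    refine hcancel (single j k c + (single j k c)ᵀ) _ (isSymm_add_transpose_self _)
      (isSymm_add_transpose_self _) ?_
    rw [← transvection_mul_add_transpose_mul_transpose i hjk,
      hcongr _ _ hji.symm _ (isSymm_add_transpose_self _)]
  refine hS.apply_eq_one_of_single ψ h0 hadd hoff fun i c => ?_
  obtain ⟨j, hji, -⟩ := ENat.exists_ne_ne_of_three_le (by simpa using hι) i i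
  have h := hcancel (single j j c) _ (transpose_single j j c)
    ((isSymm_add_transpose_self _).add (transpose_single i i c)) (by
      rw [← transvection_mul_single_mul_transpose i j,
        hcongr _ _ hji.symm _ (transpose_single j j c)])
  rwa [hadd _ _ (isSymm_add_transpose_self _) (transpose_single i i c), hoff i j hji.symm,
    one_mul] at h

end Transvection

section Siegel

theorem IsSymm.mul_mul_transpose [Fintype ι] {S : Matrix ι ι R} (hS : S.IsSymm)
    (A : Matrix ι ι R) :
    (A * S * Aᵀ).IsSymm := by
  rw [IsSymm, transpose_mul, transpose_mul, transpose_transpose, hS.eq, Matrix.mul_assoc]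

variable [DecidableEq ι]

def siegelUnipotent (S : Matrix ι ι R) : Matrix (ι ⊕ ι) (ι ⊕ ι) R :=
  fromBlocks 1 S 0 1

theorem siegelUnipotent_zero : siegelUnipotent (0 : Matrix ι ι R) = 1 := by
  simp [siegelUnipotent]

variable [Fintype ι]

theorem siegelUnipotent_add (S T : Matrix ι ι R) :
    siegelUnipotent (S + T) = siegelUnipotent S * siegelUnipotent T := by
  simp [siegelUnipotent, fromBlocks_multiply, add_comm]

theorem SpecialLinearGroup.transpose_mul_adjugate_transpose (A : SpecialLinearGroup ι R) :
    (A : Matrix ι ι R)ᵀ * (A : Matrix ι ι R).adjugateᵀ = 1 := by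
  rw [← transpose_mul, adjugate_mul, A.det_coe, one_smul, transpose_one]

def siegelLevi (A : SpecialLinearGroup ι R) : Matrix (ι ⊕ ι) (ι ⊕ ι) R :=
  fromBlocks A 0 0 (A⁻¹ : SpecialLinearGroup ι R)ᵀ

theorem siegelLevi_one : siegelLevi (1 : SpecialLinearGroup ι R) = 1 := by
  simp [siegelLevi]

theorem siegelLevi_mul (A B : SpecialLinearGroup ι R) :
    siegelLevi (A * B) = siegelLevi A * siegelLevi B := by
  simp [siegelLevi, fromBlocks_multiply]

theorem siegelLevi_mul_siegelUnipotent (A : SpecialLinearGroup ι R) (S : Matrix ι ι R) :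
    siegelLevi A * siegelUnipotent S =
      siegelUnipotent ((A : Matrix ι ι R) * S * (A : Matrix ι ι R)ᵀ) * siegelLevi A := by
  simp [siegelLevi, siegelUnipotent, fromBlocks_multiply, Matrix.mul_assoc,
    SpecialLinearGroup.transpose_mul_adjugate_transpose]

theorem siegelLevi_mem_symplecticGroup (A : SpecialLinearGroup ι R) :
    siegelLevi A ∈ symplecticGroup ι R := by
  simp [siegelLevi, SymplecticGroup.fromBlocks_mem_iff,
    SpecialLinearGroup.transpose_mul_adjugate_transpose]

theorem siegelUnipotent_mem_symplecticGroup {S : Matrix ι ι R} (hS : S.IsSymm) :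
    siegelUnipotent S ∈ symplecticGroup ι R := by
  simp [siegelUnipotent, SymplecticGroup.fromBlocks_mem_iff, hS.eq]

theorem exists_eq_siegelLevi_mul_siegelUnipotent {G : Matrix (ι ⊕ ι) (ι ⊕ ι) R}
    (hG : G ∈ symplecticGroup ι R) (h₂₁ : G.toBlocks₂₁ = 0) (h₁₁ : G.toBlocks₁₁.det = 1) :
    ∃ (A : SpecialLinearGroup ι R) (S : Matrix ι ι R), S.IsSymm ∧
      G = siegelLevi A * siegelUnipotent S := by
  set A := G.toBlocks₁₁
  set B := G.toBlocks₁₂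
  set D := G.toBlocks₂₂
  have hG' : G = fromBlocks A B 0 D := by rw [← h₂₁, fromBlocks_toBlocks]
  rw [hG', SymplecticGroup.fromBlocks_mem_iff] at hG
  obtain ⟨-, hBD, hAD⟩ := hG
  have hmul : A * A.adjugate = 1 := by rw [mul_adjugate, h₁₁, one_smul]
  have hD : D = A.adjugateᵀ := by
    simp only [transpose_zero, Matrix.zero_mul, sub_zero] at hAD
    rw [← Matrix.one_mul D, ← transpose_one, ← hmul, transpose_mul, Matrix.mul_assoc, hAD,
      Matrix.mul_one]
  refine ⟨⟨A, h₁₁⟩, A.adjugate * B, ?_, ?_⟩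
  · rw [IsSymm, transpose_mul, ← hD, hBD, hD, transpose_transpose]
  · rw [hG']
    simp [siegelLevi, siegelUnipotent, fromBlocks_multiply, ← Matrix.mul_assoc, hmul, hD]
    rfl

end Siegel

end Matrix

theorem mem_Sp_iff_mem_symplecticGroup {g : SpMat n} :
    g ∈ Sp n ↔ g ∈ symplecticGroup (Fin n) ℝ := by
  have hK : symplK n = -J (Fin n) ℝ := by simp [symplK, J, fromBlocks_neg]
  rw [SymplecticGroup.mem_iff', Sp, Set.mem_ofPred_eq, hK, Matrix.mul_neg, Matrix.neg_mul,
    neg_inj]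

theorem mapMatrix_mem_symplecticGroup_iff {l : Type*} [Fintype l] [DecidableEq l]
    (G : Matrix (l ⊕ l) (l ⊕ l) ℤ) :
    (Int.castRingHom ℝ).mapMatrix G ∈ symplecticGroup l ℝ ↔ G ∈ symplecticGroup l ℤ := by
  refine ⟨fun h => ?_, fun h => SymplecticGroup.map_mem h _⟩
  rw [SymplecticGroup.mem_iff] at h ⊢
  have h' : (Int.castRingHom ℝ).mapMatrix (G * J l ℤ * Gᵀ) =
      (Int.castRingHom ℝ).mapMatrix (J l ℤ) := by
    rwa [map_mul, map_mul, RingHom.mapMatrix_apply _ (J l ℤ), map_J,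
      RingHom.mapMatrix_apply _ Gᵀ, transpose_map]
  exact Matrix.map_injective Int.cast_injective h'

theorem mapMatrix_mem_BZ_iff (G : Matrix (Fin n ⊕ Fin n) (Fin n ⊕ Fin n) ℤ) :
    (Int.castRingHom ℝ).mapMatrix G ∈ BZ n ↔
      G ∈ symplecticGroup (Fin n) ℤ ∧ G.toBlocks₂₁ = 0 ∧ G.toBlocks₁₁.det = 1 := by
  have h₂₁ : ((Int.castRingHom ℝ).mapMatrix G).toBlocks₂₁ = 0 ↔ G.toBlocks₂₁ = 0 :=
    (map_eq_zero_iff ((Int.castRingHom ℝ).mapMatrix) (Matrix.map_injective Int.cast_injective))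
  have h₁₁ : ((Int.castRingHom ℝ).mapMatrix G).toBlocks₁₁.det = 1 ↔ G.toBlocks₁₁.det = 1 := by
    rw [← Int.cast_eq_one (α := ℝ), ← eq_intCast (Int.castRingHom ℝ), RingHom.map_det]
    rfl
  simp only [BZ, SpZ, Set.mem_ofPred_eq, mem_Sp_iff_mem_symplecticGroup,
    mapMatrix_mem_symplecticGroup_iff, h₂₁, h₁₁]
  simp

theorem exists_mapMatrix_eq_of_mem_BZ {g : SpMat n} (hg : g ∈ BZ n) :
    ∃ G : Matrix (Fin n ⊕ Fin n) (Fin n ⊕ Fin n) ℤ, (Int.castRingHom ℝ).mapMatrix G = g := by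
  choose G hG using hg.1.2
  exact ⟨of G, ext fun i j => (hG i j).symm⟩

theorem mapMatrix_siegelLevi_mem_BZ (A : SpecialLinearGroup (Fin n) ℤ) :
    (Int.castRingHom ℝ).mapMatrix (siegelLevi A) ∈ BZ n :=
  (mapMatrix_mem_BZ_iff _).2 ⟨siegelLevi_mem_symplecticGroup A, by simp [siegelLevi],
    by simp [siegelLevi]⟩

theorem mapMatrix_siegelUnipotent_mem_BZ {S : Matrix (Fin n) (Fin n) ℤ} (hS : S.IsSymm) :
    (Int.castRingHom ℝ).mapMatrix (siegelUnipotent S) ∈ BZ n :=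
  (mapMatrix_mem_BZ_iff _).2 ⟨siegelUnipotent_mem_symplecticGroup hS, by simp [siegelUnipotent],
    by simp [siegelUnipotent]⟩

theorem exists_eq_siegelLevi_mul_siegelUnipotent_of_mem_BZ {g : SpMat n} (hg : g ∈ BZ n) :
    ∃ (A : SpecialLinearGroup (Fin n) ℤ) (S : Matrix (Fin n) (Fin n) ℤ), S.IsSymm ∧
      g = (Int.castRingHom ℝ).mapMatrix (siegelLevi A) *
        (Int.castRingHom ℝ).mapMatrix (siegelUnipotent S) := by
  obtain ⟨G, rfl⟩ := exists_mapMatrix_eq_of_mem_BZ hg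
  obtain ⟨hG, h₂₁, h₁₁⟩ := (mapMatrix_mem_BZ_iff G).1 hg
  obtain ⟨A, S, hS, rfl⟩ := exists_eq_siegelLevi_mul_siegelUnipotent hG h₂₁ h₁₁
  exact ⟨A, S, hS, map_mul _ _ _⟩

theorem apply_mapMatrix_siegelLevi_eq_one {M : Type*} [CommMonoid M] (hn : 3 ≤ n)
    {χ : SpMat n → M} (hmul : ∀ g h : SpMat n, g ∈ BZ n → h ∈ BZ n → χ (g * h) = χ g * χ h)
    (hχ : χ 1 = 1) (A : SpecialLinearGroup (Fin n) ℤ) :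
    χ ((Int.castRingHom ℝ).mapMatrix (siegelLevi A)) = 1 :=
  SpecialLinearGroup.monoidHom_apply_eq_one (by simpa using hn)
    { toFun := fun A => χ ((Int.castRingHom ℝ).mapMatrix (siegelLevi A))
      map_one' := by rw [siegelLevi_one, map_one, hχ]
      map_mul' := fun A B => by
        rw [siegelLevi_mul, map_mul, hmul _ _ (mapMatrix_siegelLevi_mem_BZ A)
          (mapMatrix_siegelLevi_mem_BZ B)] } A

theorem apply_mapMatrix_siegelUnipotent_eq_one {M : Type*} [CommMonoid M] (hn : 3 ≤ n)
    {χ : SpMat n → M} (hmul : ∀ g h : SpMat n, g ∈ BZ n → h ∈ BZ n → χ (g * h) = χ g * χ h)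
    (hχ : χ 1 = 1) {S : Matrix (Fin n) (Fin n) ℤ} (hS : S.IsSymm) :
    χ ((Int.castRingHom ℝ).mapMatrix (siegelUnipotent S)) = 1 := by
  refine hS.apply_eq_one_of_transvection_congr (by simpa using hn)
    (fun S => χ ((Int.castRingHom ℝ).mapMatrix (siegelUnipotent S)))
    (by rw [siegelUnipotent_zero, map_one, hχ]) (fun S T hS hT => ?_) (fun i j hij S hS => ?_)
  · rw [siegelUnipotent_add, map_mul, hmul _ _ (mapMatrix_siegelUnipotent_mem_BZ hS)
      (mapMatrix_siegelUnipotent_mem_BZ hT)]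
  · have h := congr_arg (χ ∘ (Int.castRingHom ℝ).mapMatrix)
      (siegelLevi_mul_siegelUnipotent (SpecialLinearGroup.transvection hij 1) S)
    simp only [Function.comp_apply, map_mul] at h
    rwa [hmul _ _ (mapMatrix_siegelLevi_mem_BZ _) (mapMatrix_siegelUnipotent_mem_BZ hS),
      hmul _ _ (mapMatrix_siegelUnipotent_mem_BZ (hS.mul_mul_transpose _))
      (mapMatrix_siegelLevi_mem_BZ _), apply_mapMatrix_siegelLevi_eq_one hn hmul hχ, one_mul,
      mul_one, eq_comm] at h

/-- for `n ≥ 3`, every homomorphism `ℬ(ℤ) → ℂ*` is trivial: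
any `χ` that is multiplicative and nonvanishing on `ℬ(ℤ)` equals `1` there. -/
theorem stmt14 (n : ℕ) (hn : 3 ≤ n) (χ : SpMat n → ℂ)
    (hmul : ∀ g h : SpMat n, g ∈ BZ n → h ∈ BZ n → χ (g * h) = χ g * χ h)
    (hne : ∀ g ∈ BZ n, χ g ≠ 0) :
    ∀ g ∈ BZ n, χ g = 1 := by
  have hχ : χ 1 = 1 := by
    have h1 : (1 : SpMat n) ∈ BZ n := by
      simpa [siegelLevi_one] using mapMatrix_siegelLevi_mem_BZ (1 : SpecialLinearGroup (Fin n) ℤ)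
    exact (mul_eq_left₀ (hne 1 h1)).1 (by rw [← hmul 1 1 h1 h1, mul_one])
  intro g hg
  obtain ⟨A, S, hS, rfl⟩ := exists_eq_siegelLevi_mul_siegelUnipotent_of_mem_BZ hg
  rw [hmul _ _ (mapMatrix_siegelLevi_mem_BZ A) (mapMatrix_siegelUnipotent_mem_BZ hS),
    apply_mapMatrix_siegelLevi_eq_one hn hmul hχ,
    apply_mapMatrix_siegelUnipotent_eq_one hn hmul hχ hS, one_mul]
end
end

section
/- Let z be a complex number with Im z > 0, and set w = −1 − 1/z and u = −1 − 1/w. Then Im w > 0, Im u > 0, −1 − 1/u = z, and Log z + Log w + Log u = 2π·i, where Log denotes the principal branch of the complex logarithm. Consequently, for any real α, the operator f ↦ (z ↦ f(−1−1/z)·exp(−α·Log z)) applied three times to a function on the upper half-plane multiplies it by exp(−2πiα). -/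
/-! The map `z ↦ -1 - 1/z` is the Möbius transformation of `J = ((0,-1),(1,-1))`; it preserves
the upper half-plane and `J³ = 1`. Along the orbit `z, w, u` one has `w = -(z+1)/z` and
`u = -1/(z+1)`, so `z w u = 1` and `Log z + Log w + Log u ∈ 2πiℤ`. The imaginary part of that
sum is `arg z + arg w + arg u ∈ (0, 3π)`, which pins the multiple of `2πi` down to `1`. -/

open Complex Finset

theorem Complex.ne_zero_of_im_pos {z : ℂ} (hz : 0 < z.im) : z ≠ 0 :=
  ne_of_apply_ne im hz.ne'

theorem Complex.im_neg_one_sub_one_div (z : ℂ) : (-1 - 1 / z).im = z.im / normSq z := by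
  simp [neg_div]

theorem Complex.im_neg_one_sub_one_div_pos {z : ℂ} (hz : 0 < z.im) : 0 < (-1 - 1 / z).im := by
  rw [im_neg_one_sub_one_div]
  exact div_pos hz (normSq_pos.2 (ne_zero_of_im_pos hz))

theorem Complex.arg_pos_of_im_pos {z : ℂ} (hz : 0 < z.im) : 0 < arg z :=
  (arg_nonneg_iff.2 hz.le).lt_of_ne fun h => hz.ne' (arg_eq_zero_iff.1 h.symm).2

section Field

variable {K : Type*} [Field K] {z : K}

theorem neg_one_sub_one_div_eq_neg_add_one_div (hz : z ≠ 0) : -1 - 1 / z = -(z + 1) / z := by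
  field_simp
  ring

theorem neg_one_sub_one_div_iterate_two (hz : z ≠ 0) (hz1 : z + 1 ≠ 0) :
    -1 - 1 / (-1 - 1 / z) = -1 / (z + 1) := by
  rw [neg_one_sub_one_div_eq_neg_add_one_div hz]
  field_simp
  ring

theorem neg_one_sub_one_div_iterate_three (hz : z ≠ 0) (hz1 : z + 1 ≠ 0) :
    -1 - 1 / (-1 - 1 / (-1 - 1 / z)) = z := by
  rw [neg_one_sub_one_div_iterate_two hz hz1]
  field_simp
  ring

theorem mul_neg_one_sub_one_div_mul_neg_one_sub_one_div (hz : z ≠ 0) (hz1 : z + 1 ≠ 0) :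
    z * (-1 - 1 / z) * (-1 - 1 / (-1 - 1 / z)) = 1 := by
  rw [neg_one_sub_one_div_iterate_two hz hz1, neg_one_sub_one_div_eq_neg_add_one_div hz]
  field_simp

end Field

theorem Complex.log_add_log_add_log_eq_two_pi_mul_I {a b c : ℂ} (ha : 0 < a.im) (hb : 0 < b.im)
    (hc : 0 < c.im) (habc : a * b * c = 1) :
    log a + log b + log c = 2 * Real.pi * I := by
  have hexp : exp (log a + log b + log c) = 1 := by
    rw [exp_add, exp_add, exp_log (ne_zero_of_im_pos ha), exp_log (ne_zero_of_im_pos hb),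
      exp_log (ne_zero_of_im_pos hc), habc]
  obtain ⟨n, hn⟩ := exp_eq_one_iff.1 hexp
  have harg : arg a + arg b + arg c = n * (2 * Real.pi) := by
    simpa [log_im] using congrArg im hn
  have hn1 : n = 1 := by
    have hlo : (0 : ℝ) < n * (2 * Real.pi) := by
      linarith [arg_pos_of_im_pos ha, arg_pos_of_im_pos hb, arg_pos_of_im_pos hc]
    have hhi : n * (2 * Real.pi) ≤ 3 * Real.pi := by
      linarith [arg_le_pi a, arg_le_pi b, arg_le_pi c]
    have hpos : (0 : ℝ) < n := pos_of_mul_pos_left hlo (by positivity)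
    have hlt : (n : ℝ) < 2 := by nlinarith [Real.pi_pos]
    have : 0 < n := by exact_mod_cast hpos
    have : n < 2 := by exact_mod_cast hlt
    omega
  rw [hn, hn1]
  push_cast
  ring

theorem iterate_weighted_comp_apply {α M : Type*} [CommMonoid M] (φ : α → α) (e : α → M)
    (f : α → M) (n : ℕ) (z : α) :
    ((fun g w => g (φ w) * e w)^[n] f) z = f (φ^[n] z) * ∏ k ∈ range n, e (φ^[k] z) := by
  induction n generalizing f with
  | zero => simp
  | succ n ih =>
    rw [Function.iterate_succ_apply, ih, Function.iterate_succ_apply', prod_range_succ]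
    ac_rfl

/-- for `Im z > 0`, with `w = −1 − 1/z` and `u = −1 − 1/w`, one has
`Im w > 0`, `Im u > 0`, `−1 − 1/u = z` and `Log z + Log w + Log u = 2πi`;
consequently the operator `f ↦ (z ↦ f(−1−1/z) exp(−α Log z))` applied three times
multiplies a function on the upper half-plane by `exp(−2πiα)`. -/
theorem stmt17 (z : ℂ) (hz : 0 < z.im) :
    0 < (-1 - 1 / z).im ∧
    0 < (-1 - 1 / (-1 - 1 / z)).im ∧
    -1 - 1 / (-1 - 1 / (-1 - 1 / z)) = z ∧
    Complex.log z + Complex.log (-1 - 1 / z) + Complex.log (-1 - 1 / (-1 - 1 / z))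
      = 2 * Real.pi * Complex.I ∧
    ∀ (α : ℝ) (f : ℂ → ℂ),
      ((fun (g : ℂ → ℂ) =>
          fun w => g (-1 - 1 / w) * Complex.exp (-(α : ℂ) * Complex.log w))^[3] f) z
        = Complex.exp (-2 * Real.pi * Complex.I * α) * f z := by
  have hz0 : z ≠ 0 := ne_zero_of_im_pos hz
  have hz1 : z + 1 ≠ 0 := ne_zero_of_im_pos (by simpa using hz)
  have hw := im_neg_one_sub_one_div_pos hz
  have hu := im_neg_one_sub_one_div_pos hw
  have hJ3 := neg_one_sub_one_div_iterate_three hz0 hz1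
  have hlog := log_add_log_add_log_eq_two_pi_mul_I hz hw hu
    (mul_neg_one_sub_one_div_mul_neg_one_sub_one_div hz0 hz1)
  refine ⟨hw, hu, hJ3, hlog, fun α f => ?_⟩
  rw [iterate_weighted_comp_apply, ← exp_sum, ← mul_sum]
  simp only [sum_range_succ, sum_range_zero, Function.iterate_succ_apply', Function.iterate_zero,
    id_eq, zero_add, hJ3]
  rw [hlog, mul_comm]
  ring_nf
end
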